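/- Let V(q,h) = 2(1 − hη) + (η')² + ‖μ'‖², let δ ∈ (0,1), h ∈ {−1,1}, and suppose hη ≤ −δ. Then for any h⁺ ∈ sgn̄(η), one has h⁺ = −h and V(q,h⁺) − V(q,h) = 4hη ≤ −4δ < 0; in particular V strictly decreases over jumps of the hybrid closed-loop system. -/
import Mathlib

noncomputable section

/-- Euclidean dot product in `ℝ³`. -/
def dot3 (u v : Fin 3 → ℝ) : ℝ := u 0 * v 0 + u 1 * v 1 + u 2 * v 2

/-- The set-valued sign function. -/
def sgnbar (s : ℝ) : Set ℝ :=
  if 0 < s then {1} else if s < 0 then {-1} else {-1, 1}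

/-- The Lyapunov function `V = 2(1 − hη) + (η')² + ‖μ'‖²` strictly decreases over jumps
of the hybrid closed-loop system: if `h ∈ {−1,1}`, `δ ∈ (0,1)` and `hη ≤ −δ`, then any
`h⁺ ∈ sgn̄(η)` satisfies `h⁺ = −h` and
`V(q,h⁺) − V(q,h) = 4hη ≤ −4δ < 0`. -/
theorem V_decreases_over_jumps (δ h η η' hplus : ℝ) (μ' : Fin 3 → ℝ)
    (hδ0 : 0 < δ) (hδ1 : δ < 1) (hh : h = 1 ∨ h = -1)
    (hjump : h * η ≤ -δ) (hmem : hplus ∈ sgnbar η) :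
    hplus = -h ∧
    (2 * (1 - hplus * η) + η' ^ 2 + dot3 μ' μ') -
        (2 * (1 - h * η) + η' ^ 2 + dot3 μ' μ') = 4 * (h * η) ∧
    4 * (h * η) ≤ -(4 * δ) ∧ -(4 * δ) < 0 := by
  have hp : hplus = -h := by
    rcases hh with rfl | rfl
    · have hη : η < 0 := by nlinarith
      simp [sgnbar, not_lt.mpr hη.le, hη] at hmem
      simpa using hmem
    · have hη : 0 < η := by nlinarith
      simp [sgnbar, hη] at hmem
      simpa using hmem
  subst hp
  refine ⟨rfl, by ring, by nlinarith, by nlinarith⟩
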